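/- Let Q(x,y) = ∑_{i,j≥0} Q_{i,j} x^i y^j ∈ ℚ[[x,y]] and G(x) = x³ ∑_{i≥0} Q_{i,0} x^i ∈ ℚ[[x]]. Then the identity (xy − x³ − y³) · Q(x,y) = x²y² − G(x) − G(y) holds in the ring ℚ[[x,y]] of formal power series in two variables. -/

import Mathlib

/-- `w : Fin (n+1) → ℤ × ℤ` is a knight walk of length `n`: it starts at `(1,1)`, takes its
steps in `{(-1,2), (2,-1)}` and all its vertices have nonnegative coordinates. -/
def IsKnightWalk (n : ℕ) (w : Fin (n + 1) → ℤ × ℤ) : Prop :=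
  w 0 = (1, 1) ∧
  (∀ k : Fin n, w k.succ - w k.castSucc ∈ ({(-1, 2), (2, -1)} : Set (ℤ × ℤ))) ∧
  ∀ k, 0 ≤ (w k).1 ∧ 0 ≤ (w k).2

/-- `Q i j` is the number of knight walks (of any length) ending at `(i, j)`. -/
noncomputable def Q (i j : ℕ) : ℕ :=
  Nat.card {p : Σ n : ℕ, Fin (n + 1) → ℤ × ℤ //
    IsKnightWalk p.1 p.2 ∧ p.2 (Fin.last p.1) = ((i : ℤ), (j : ℤ))}

/-- `Q(x, y) = ∑_{i,j ≥ 0} Q_{i,j} xⁱ yʲ` as a formal power series in two variables. -/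
noncomputable def Qxy : MvPowerSeries (Fin 2) ℚ :=
  fun e => (Q (e 0) (e 1) : ℚ)

/-- Coefficients of `G(x) = x³ ∑_{i ≥ 0} Q_{i,0} xⁱ`. -/
noncomputable def gCoeff (n : ℕ) : ℚ :=
  if 3 ≤ n then (Q (n - 3) 0 : ℚ) else 0

/-- `G(x)` viewed inside `ℚ[[x, y]]`. -/
noncomputable def Gx : MvPowerSeries (Fin 2) ℚ :=
  fun e => if e 1 = 0 then gCoeff (e 0) else 0

/-- `G(y)` viewed inside `ℚ[[x, y]]`. -/
noncomputable def Gy : MvPowerSeries (Fin 2) ℚ :=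
  fun e => if e 0 = 0 then gCoeff (e 1) else 0

/-!
Deleting the last step of a knight walk to `c ≠ (1, 1)` leaves a walk to `c - (-1, 2)` or to
`c - (2, -1)`, so, with `Q` extended by zero off the quadrant,
`Q_c = [c = (1, 1)] + Q_{c - (-1, 2)} + Q_{c - (2, -1)}` for every `c` in the quadrant. At
`x^{i+1} y^{j+1}` this is the functional equation; on the axes only `-x³ Q` and `-y³ Q`
contribute, giving `G(x)` and, by the symmetry `Q_{i,j} = Q_{j,i}` (reflect the walk in the
diagonal), `G(y)`.
-/

open MvPowerSeries

def knightSteps : Finset (ℤ × ℤ) := {(-1, 2), (2, -1)}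

lemma fst_add_snd_of_mem_knightSteps {s : ℤ × ℤ} (hs : s ∈ knightSteps) : s.1 + s.2 = 1 := by
  simp only [knightSteps, Finset.mem_insert, Finset.mem_singleton] at hs
  rcases hs with rfl | rfl <;> rfl

lemma isKnightWalk_zero_iff {w : Fin 1 → ℤ × ℤ} : IsKnightWalk 0 w ↔ w 0 = (1, 1) :=
  ⟨And.left, fun h => ⟨h, fun k => k.elim0, Fin.forall_fin_one.2 (by simp [h])⟩⟩

lemma isKnightWalk_succ_iff {n : ℕ} {w : Fin (n + 2) → ℤ × ℤ} :
    IsKnightWalk (n + 1) w ↔ IsKnightWalk n (Fin.init w) ∧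
      w (Fin.last _) - w (Fin.last n).castSucc ∈ knightSteps ∧
      0 ≤ (w (Fin.last _)).1 ∧ 0 ≤ (w (Fin.last _)).2 := by
  simp only [IsKnightWalk, Fin.forall_fin_succ' (n := n), Fin.forall_fin_succ' (n := n + 1),
    Fin.init, Fin.succ_castSucc, Fin.castSucc_zero, knightSteps, Finset.coe_pair,
    ← Finset.mem_coe]
  tauto

lemma IsKnightWalk.swap {n : ℕ} {w : Fin (n + 1) → ℤ × ℤ} (hw : IsKnightWalk n w) :
    IsKnightWalk n (Prod.swap ∘ w) := by
  obtain ⟨h0, hstep, hnn⟩ := hw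
  refine ⟨by simp [h0], fun k => ?_, fun k => (hnn k).symm⟩
  rcases hstep k with h | h <;> simp_all [← Prod.swap_sub]

def KnightWalk (n : ℕ) (c : ℤ × ℤ) : Type :=
  {w : Fin (n + 1) → ℤ × ℤ // IsKnightWalk n w ∧ w (Fin.last n) = c}

namespace KnightWalk

variable {n : ℕ} {c : ℤ × ℤ}

lemma nonneg (w : KnightWalk n c) : 0 ≤ c.1 ∧ 0 ≤ c.2 :=
  w.2.2 ▸ w.2.1.2.2 _

instance : Subsingleton (KnightWalk 0 c) :=
  ⟨fun v w => Subtype.ext <| funext fun k => by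
    rw [Subsingleton.elim (α := Fin 1) k (Fin.last 0), v.2.2, w.2.2]⟩

lemma nonempty_zero_iff : Nonempty (KnightWalk 0 c) ↔ c = (1, 1) := by
  refine ⟨fun ⟨w⟩ => ?_, fun h => ⟨fun _ => c, isKnightWalk_zero_iff.2 h, rfl⟩⟩
  rw [← w.2.2]
  exact isKnightWalk_zero_iff.1 w.2.1

lemma card_zero : Nat.card (KnightWalk 0 c) = if c = (1, 1) then 1 else 0 := by
  split_ifs with h
  · have := nonempty_zero_iff.2 h
    exact Nat.card_unique
  · have := not_nonempty_iff.1 (mt nonempty_zero_iff.1 h)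
    exact Nat.card_of_isEmpty

def succEquiv (hc : 0 ≤ c.1 ∧ 0 ≤ c.2) :
    KnightWalk (n + 1) c ≃ Σ s : knightSteps, KnightWalk n (c - s) where
  toFun w :=
    have hw := isKnightWalk_succ_iff.1 w.2.1
    have hlast : w.1 (Fin.last (n + 1)) = c := w.2.2
    ⟨⟨c - w.1 (Fin.last n).castSucc, by simpa only [hlast] using hw.2.1⟩, Fin.init w.1, hw.1,
      by simp [Fin.init]⟩
  invFun p := ⟨Fin.snoc p.2.1 c, isKnightWalk_succ_iff.2 ⟨by simp [p.2.2.1], by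
      simp [p.2.2.2, p.1.2], by simp [hc]⟩, by simp⟩
  left_inv w := Subtype.ext <| by
    conv_rhs => rw [← Fin.snoc_init_self w.1, w.2.2]
  right_inv p := Sigma.subtype_ext (Subtype.ext <| by simp [p.2.2.2])
    (Fin.init_snoc (α := fun _ => ℤ × ℤ) c p.2.1)

def sigmaEquiv (hc : 0 ≤ c.1 ∧ 0 ≤ c.2) :
    (Σ n, KnightWalk n c) ≃ KnightWalk 0 c ⊕ Σ s : knightSteps, Σ n, KnightWalk n (c - s) :=
  (Equiv.sigmaNatSucc _).trans <| Equiv.sumCongr (Equiv.refl _) <|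
    (Equiv.sigmaCongrRight fun _ => succEquiv hc).trans
      { toFun := fun p => ⟨p.2.1, p.1, p.2.2⟩
        invFun := fun p => ⟨p.2.1, p.1, p.2.2⟩
        left_inv := fun _ => rfl
        right_inv := fun _ => rfl }

/-- Each step raises the coordinate sum by one, so unfolding the last step terminates. -/
instance finite_sigma : Finite (Σ n, KnightWalk n c) := by
  suffices h : ∀ k : ℕ, ∀ c : ℤ × ℤ, c.1 + c.2 < k → Finite (Σ n, KnightWalk n c) from
    h ((c.1 + c.2).toNat + 1) c (by omega)
  intro k
  induction k with
  | zero =>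
    intro c hk
    have : IsEmpty (Σ n, KnightWalk n c) := ⟨fun w => by have := w.2.nonneg; omega⟩
    infer_instance
  | succ k ih =>
    intro c hk
    by_cases hc : 0 ≤ c.1 ∧ 0 ≤ c.2
    · have : ∀ s : knightSteps, Finite (Σ n, KnightWalk n (c - s)) := fun s => by
        have := fst_add_snd_of_mem_knightSteps s.2
        exact ih _ (by simp only [Prod.fst_sub, Prod.snd_sub]; omega)
      exact Finite.of_equiv _ (sigmaEquiv hc).symm
    · have : IsEmpty (Σ n, KnightWalk n c) := ⟨fun w => hc w.2.nonneg⟩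
      infer_instance

def swapEquiv : KnightWalk n c ≃ KnightWalk n c.swap where
  toFun w := ⟨Prod.swap ∘ w.1, w.2.1.swap, by simp [w.2.2]⟩
  invFun w := ⟨Prod.swap ∘ w.1, w.2.1.swap, by simp [w.2.2]⟩
  left_inv w := Subtype.ext <| funext fun _ => Prod.swap_swap _
  right_inv w := Subtype.ext <| funext fun _ => Prod.swap_swap _

end KnightWalk

noncomputable def knightCount (c : ℤ × ℤ) : ℕ :=
  Nat.card (Σ n, KnightWalk n c)

lemma Q_eq_knightCount (i j : ℕ) : Q i j = knightCount (i, j) :=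
  Nat.card_congr
    { toFun := fun p => ⟨p.1.1, p.1.2, p.2⟩
      invFun := fun p => ⟨⟨p.1, p.2.1⟩, p.2.2⟩
      left_inv := fun _ => rfl
      right_inv := fun _ => rfl }

lemma knightCount_eq_zero {c : ℤ × ℤ} (hc : ¬(0 ≤ c.1 ∧ 0 ≤ c.2)) : knightCount c = 0 :=
  have : IsEmpty (Σ n, KnightWalk n c) := ⟨fun w => hc w.2.nonneg⟩
  Nat.card_of_isEmpty

lemma knightCount_eq_of_nonneg {c : ℤ × ℤ} (hc : 0 ≤ c.1 ∧ 0 ≤ c.2) :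
    knightCount c = (if c = (1, 1) then 1 else 0) + knightCount (c - (-1, 2)) +
      knightCount (c - (2, -1)) := by
  rw [knightCount, Nat.card_congr (KnightWalk.sigmaEquiv hc), Nat.card_sum, Nat.card_sigma,
    KnightWalk.card_zero,
    Finset.sum_coe_sort knightSteps fun s => Nat.card (Σ n, KnightWalk n (c - s)), knightSteps,
    Finset.sum_pair (by decide), add_assoc]
  rfl

lemma knightCount_swap (c : ℤ × ℤ) : knightCount c.swap = knightCount c :=
  (Nat.card_congr (Equiv.sigmaCongrRight fun _ => KnightWalk.swapEquiv)).symm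

/-- Indexing by `ℤ × ℤ` makes multiplication by a monomial a plain shift of indices, provided
`F` vanishes off the quadrant. -/
def quadrantSeries {R : Type*} (F : ℤ × ℤ → R) : MvPowerSeries (Fin 2) R :=
  fun e => F (e 0, e 1)

lemma coeff_X_pow_mul_X_pow_mul_quadrantSeries {R : Type*} [Semiring R] {F : ℤ × ℤ → R}
    (hF : ∀ c : ℤ × ℤ, ¬(0 ≤ c.1 ∧ 0 ≤ c.2) → F c = 0) (a b : ℕ) (e : Fin 2 →₀ ℕ) :
    coeff e (X 0 ^ a * X 1 ^ b * quadrantSeries F) = F (e 0 - a, e 1 - b) := by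
  rw [X_pow_eq, X_pow_eq, monomial_mul_monomial, one_mul, coeff_monomial_mul]
  split_ifs with h
  · have ha : a ≤ e 0 := by simpa using h 0
    have hb : b ≤ e 1 := by simpa using h 1
    simp [quadrantSeries, coeff_apply, ha, hb]
  · refine (hF _ fun hnn => h ?_).symm
    intro i
    fin_cases i <;> simp <;> omega

lemma coeff_X_pow_mul_X_pow {R : Type*} [Semiring R] (a b : ℕ) (e : Fin 2 →₀ ℕ) :
    coeff e (X 0 ^ a * X 1 ^ b : MvPowerSeries (Fin 2) R) =
      if e 0 = a ∧ e 1 = b then 1 else 0 := by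
  rw [X_pow_eq, X_pow_eq, monomial_mul_monomial, one_mul, coeff_monomial]
  simp [Finsupp.ext_iff, Fin.forall_fin_two]

lemma gCoeff_eq_knightCount (n : ℕ) : gCoeff n = knightCount (n - 3, 0) := by
  unfold gCoeff
  split_ifs with h
  · rw [Q_eq_knightCount, Nat.cast_sub h]
    rfl
  · rw [knightCount_eq_zero (by omega), Nat.cast_zero]

lemma knightCount_functional_equation_coeff (i j : ℕ) :
    (knightCount (i - 1, j - 1) : ℚ) - knightCount (i - 3, j) - knightCount (i, j - 3) =
      (if i = 2 ∧ j = 2 then 1 else 0) - (if j = 0 then (knightCount (i - 3, 0) : ℚ) else 0) -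
        (if i = 0 then (knightCount (j - 3, 0) : ℚ) else 0) := by
  rcases Nat.eq_zero_or_pos i with rfl | hi
  · rw [← knightCount_swap ((j : ℤ) - 3, 0)]
    simp [knightCount_eq_zero]
  rcases Nat.eq_zero_or_pos j with rfl | hj
  · simp [knightCount_eq_zero, hi.ne']
  have hrec := knightCount_eq_of_nonneg (c := ((i : ℤ) - 1, (j : ℤ) - 1)) (by omega)
  have h1 : ((i : ℤ) - 1, (j : ℤ) - 1) - (-1, 2) = ((i : ℤ), (j : ℤ) - 3) := by
    ext <;> simp only [Prod.fst_sub, Prod.snd_sub] <;> ring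
  have h2 : ((i : ℤ) - 1, (j : ℤ) - 1) - (2, -1) = ((i : ℤ) - 3, (j : ℤ)) := by
    ext <;> simp only [Prod.fst_sub, Prod.snd_sub] <;> ring
  have h3 : ((i : ℤ) - 1, (j : ℤ) - 1) = (1, 1) ↔ i = 2 ∧ j = 2 := by
    simp only [Prod.ext_iff]; omega
  rw [h1, h2] at hrec
  simp only [hrec, h3, hi.ne', hj.ne', if_false, Nat.cast_add, Nat.cast_ite, Nat.cast_one,
    Nat.cast_zero]
  ring

/-- The functional equation `(xy − x³ − y³) Q(x,y) = x²y² − G(x) − G(y)` in `ℚ[[x, y]]`. -/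
theorem knight_functional_equation :
    (MvPowerSeries.X 0 * MvPowerSeries.X 1 - MvPowerSeries.X 0 ^ 3 -
        MvPowerSeries.X 1 ^ 3) * Qxy =
      MvPowerSeries.X 0 ^ 2 * MvPowerSeries.X 1 ^ 2 - Gx - Gy := by
  have hQ : Qxy = quadrantSeries fun c => (knightCount c : ℚ) :=
    funext fun e => congrArg Nat.cast (Q_eq_knightCount (e 0) (e 1))
  have hF : ∀ c : ℤ × ℤ, ¬(0 ≤ c.1 ∧ 0 ≤ c.2) → (knightCount c : ℚ) = 0 := fun c hc => by
    rw [knightCount_eq_zero hc, Nat.cast_zero]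
  have hX : (X 0 * X 1 - X 0 ^ 3 - X 1 ^ 3 : MvPowerSeries (Fin 2) ℚ) =
      X 0 ^ 1 * X 1 ^ 1 - X 0 ^ 3 * X 1 ^ 0 - X 0 ^ 0 * X 1 ^ 3 := by ring
  ext e
  rw [hX, hQ, sub_mul, sub_mul, map_sub, map_sub, map_sub, map_sub,
    coeff_X_pow_mul_X_pow_mul_quadrantSeries hF, coeff_X_pow_mul_X_pow_mul_quadrantSeries hF,
    coeff_X_pow_mul_X_pow_mul_quadrantSeries hF, coeff_X_pow_mul_X_pow]
  simp only [Gx, Gy, coeff_apply, gCoeff_eq_knightCount, Nat.cast_ofNat, Nat.cast_one,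
    Nat.cast_zero, sub_zero]
  exact knightCount_functional_equation_coeff (e 0) (e 1)
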